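/- Let S and S' be self-similar Jordan zippers in ℝ^n whose attractors γ, γ' are arcs of bounded turning, with ratios p_i, q_i and equal signatures. Set α = min_i min(log p_i / log q_i, log q_i / log p_i). Then α ≤ 1, and α = 1 if and only if p_i = q_i for all i ∈ {1, ..., m}. Consequently, the agreeing homeomorphism f : γ → γ' is bi-Lipschitz if and only if p_i = q_i for all i (given the bounded turning hypotheses on both attractors). -/

import Mathlib

/-!
The bounds on `α` are elementary: for `p, q ∈ (0,1)` the logarithms are negative and the smaller
of `log p / log q` and `log q / log p` is at most `1`, with equality only when `p = q`.

If `f` is bi-Lipschitz, apply `S_i^k` to two points of `γ`: distances shrink by `p_i^k` in `γ`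
and, through `f`, by `q_i^k` in `γ'`, so `(p_i / q_i)^k` stays bounded above and below and
`p_i = q_i`.

Conversely, let `p = q` and let `g` be a structural parametrization of `γ` over the linear
zipper `T`; then `f ∘ g` is one of `γ'` over the same `T`. Every parameter interval `[u, v]` is
covered by two overlapping cells `T_{l₁}[0,1]`, `T_{l₂}[0,1]`, each of which has a child cell
inside `[u, v]`. Hence `diam g[u, v]` and `diam (f ∘ g)[u, v]` are both comparable to
`max (p_{l₁}, p_{l₂})`, with constants independent of `u, v`, and bounded turning of the two arcs
turns diameters of subarcs into distances between their endpoints.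
-/

open Set Metric

/-- `S i`, for `i < m`, is a contracting similarity with ratio `r i ∈ (0,1)`. -/
def IsSimilaritySystem {X : Type*} [MetricSpace X] (m : ℕ)
    (S : ℕ → X → X) (r : ℕ → ℝ) : Prop :=
  ∀ i < m, 0 < r i ∧ r i < 1 ∧ ∀ x y, dist (S i x) (S i y) = r i * dist x y

/-- Self-similar zipper with maps `S 0, …, S (m-1)`, ratios `r`, vertices `z 0, …, z m`,
signature `ε` (values in `{0,1}`).  Here `S i` plays the role of the map `S_{i+1}` of the
paper, so the zipper conditions read `S i (z 0) = z (i + ε i)` and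
`S i (z m) = z (i + 1 - ε i)`. -/
def IsZipper {X : Type*} [MetricSpace X] (m : ℕ)
    (S : ℕ → X → X) (r : ℕ → ℝ) (z : ℕ → X) (ε : ℕ → ℕ) : Prop :=
  1 ≤ m ∧ IsSimilaritySystem m S r ∧ (∀ i < m, ε i ≤ 1) ∧
    ∀ i < m, S i (z 0) = z (i + ε i) ∧ S i (z m) = z (i + 1 - ε i)

/-- Linear zipper on `[0,1]`, with vertices `0 = t 0 < t 1 < … < t m = 1`. -/
def IsLinearZipper (m : ℕ) (T : ℕ → ℝ → ℝ) (r : ℕ → ℝ) (t : ℕ → ℝ) (ε : ℕ → ℕ) : Prop :=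
  IsZipper m T r t ε ∧ t 0 = 0 ∧ t m = 1 ∧ ∀ i < m, t i < t (i + 1)

/-- `K` is the attractor of the iterated function system `{S i : i < m}`. -/
def IsAttractor {X : Type*} [MetricSpace X] (m : ℕ) (S : ℕ → X → X) (K : Set X) : Prop :=
  K.Nonempty ∧ IsCompact K ∧ K = ⋃ i ∈ Finset.range m, S i '' K

/-- `g` is a structural parametrization of the zipper `S` (with vertices `z`)
relative to the linear zipper `T` (with vertices `t`). -/
def IsStructuralParam {X : Type*} [MetricSpace X] (m : ℕ) (S : ℕ → X → X)
    (T : ℕ → ℝ → ℝ) (t : ℕ → ℝ) (z : ℕ → X) (g : ℝ → X) : Prop :=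
  ContinuousOn g (Icc 0 1) ∧ (∀ i ≤ m, g (t i) = z i) ∧
    ∀ i < m, ∀ x ∈ Icc (0:ℝ) 1, S i (g x) = g (T i x)

/-- A Jordan zipper: a zipper whose attractor `γ` is a Jordan arc, i.e. some structural
parametrization is injective on `[0,1]` (hence a homeomorphism onto `γ`). -/
def IsJordanZipper {X : Type*} [MetricSpace X] (m : ℕ) (S : ℕ → X → X) (r : ℕ → ℝ)
    (z : ℕ → X) (ε : ℕ → ℕ) (γ : Set X) : Prop :=
  IsZipper m S r z ε ∧ IsAttractor m S γ ∧
    ∃ T rT t g, IsLinearZipper m T rT t ε ∧ IsStructuralParam m S T t z g ∧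
      InjOn g (Icc 0 1) ∧ g '' Icc 0 1 = γ

/-- `g` is an injective continuous parametrization of the arc `γ` by `[0,1]`. -/
def IsArcParam {X : Type*} [MetricSpace X] (γ : Set X) (g : ℝ → X) : Prop :=
  ContinuousOn g (Icc 0 1) ∧ InjOn g (Icc 0 1) ∧ g '' Icc 0 1 = γ

/-- Bounded turning with constant `M`: every subarc `γ_{xy}` (expressed via any
parametrization of the arc) has diameter at most `M‖x - y‖`. -/
def BoundedTurning {X : Type*} [MetricSpace X] (γ : Set X) (M : ℝ) : Prop :=
  0 < M ∧ ∀ g : ℝ → X, IsArcParam γ g →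
    ∀ s ∈ Icc (0:ℝ) 1, ∀ u ∈ Icc (0:ℝ) 1, diam (g '' uIcc s u) ≤ M * dist (g s) (g u)

/-- `f` agrees with the systems `S` and `S'` on `γ`: `f ∘ S i = S' i ∘ f` on `γ`. -/
def Agrees {X Y : Type*} [MetricSpace X] [MetricSpace Y] (m : ℕ)
    (S : ℕ → X → X) (S' : ℕ → Y → Y) (γ : Set X) (f : X → Y) : Prop :=
  ∀ i < m, ∀ x ∈ γ, f (S i x) = S' i (f x)

/-- `f` restricts to a homeomorphism of the compact set `γ` onto `γ'`. -/
def IsHomeoOnto {X Y : Type*} [MetricSpace X] [MetricSpace Y]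
    (γ : Set X) (γ' : Set Y) (f : X → Y) : Prop :=
  ContinuousOn f γ ∧ InjOn f γ ∧ f '' γ = γ'

/-- Composition `S_{i₁} ∘ … ∘ S_{i_k}` along a multi-index (a list). -/
def compS {X : Type*} (S : ℕ → X → X) : List ℕ → X → X
  | [] => id
  | i :: l => S i ∘ compS S l

/-- Product of the ratios along a multi-index. -/
def ratioProd (p : ℕ → ℝ) (l : List ℕ) : ℝ := (l.map p).prod

open Bornology

section Words

variable {X : Type*}

lemma compS_append (S : ℕ → X → X) (l₁ l₂ : List ℕ) :
    compS S (l₁ ++ l₂) = compS S l₁ ∘ compS S l₂ := by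
  induction l₁ with
  | nil => rfl
  | cons i l ih => rw [List.cons_append, compS, compS, ih, Function.comp_assoc]

lemma ratioProd_cons (p : ℕ → ℝ) (i : ℕ) (l : List ℕ) :
    ratioProd p (i :: l) = p i * ratioProd p l := by
  simp [ratioProd]

lemma ratioProd_append_singleton (p : ℕ → ℝ) (l : List ℕ) (i : ℕ) :
    ratioProd p (l ++ [i]) = ratioProd p l * p i := by
  simp [ratioProd]

lemma ratioProd_replicate (p : ℕ → ℝ) (k i : ℕ) :
    ratioProd p (List.replicate k i) = p i ^ k := by
  simp [ratioProd]

lemma mapsTo_compS {S : ℕ → X → X} {m : ℕ} {s : Set X} (hs : ∀ i < m, MapsTo (S i) s s)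
    {l : List ℕ} (hl : ∀ j ∈ l, j < m) : MapsTo (compS S l) s s := by
  induction l with
  | nil => exact mapsTo_id s
  | cons i l ih =>
    simp only [List.mem_cons, forall_eq_or_imp] at hl
    exact (hs i hl.1).comp (ih hl.2)

end Words

lemma forall_mem_append_singleton_lt {m : ℕ} {l : List ℕ} (hl : ∀ j ∈ l, j < m) {i : ℕ}
    (hi : i < m) : ∀ j ∈ l ++ [i], j < m := by
  simpa [or_imp, forall_and] using ⟨hl, hi⟩

section Similarity

variable {X Y : Type*} [MetricSpace X] [MetricSpace Y] {m : ℕ}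

lemma IsSimilaritySystem.ratioProd_pos {S : ℕ → X → X} {p : ℕ → ℝ}
    (hS : IsSimilaritySystem m S p) {l : List ℕ} (hl : ∀ j ∈ l, j < m) : 0 < ratioProd p l :=
  List.prod_pos (by simpa using fun j hj => (hS j (hl j hj)).1)

lemma IsSimilaritySystem.dist_compS {S : ℕ → X → X} {p : ℕ → ℝ}
    (hS : IsSimilaritySystem m S p) {l : List ℕ} (hl : ∀ j ∈ l, j < m) (x y : X) :
    dist (compS S l x) (compS S l y) = ratioProd p l * dist x y := by
  induction l with
  | nil => simp [compS, ratioProd]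
  | cons i l ih =>
    simp only [List.mem_cons, forall_eq_or_imp] at hl
    simp only [compS, Function.comp_apply, (hS i hl.1).2.2, ih hl.2, ratioProd_cons, mul_assoc]

lemma diam_image_of_dist_eq {F : X → Y} {r : ℝ} (hr : 0 < r)
    (h : ∀ x y, dist (F x) (F y) = r * dist x y) (A : Set X) :
    diam (F '' A) = r * diam A := by
  set K := Real.toNNReal r
  have hK0 : K ≠ 0 := by simp [K, hr]
  have hF : ∀ x y, edist (F x) (F y) = K * edist x y := fun x y => by
    rw [edist_dist, edist_dist, h, ENNReal.ofReal_mul hr.le]; rfl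
  have hanti : AntilipschitzWith K⁻¹ F := fun x y => by
    rw [hF, ENNReal.coe_inv hK0, ← mul_assoc,
      ENNReal.inv_mul_cancel (by simpa using hK0) ENNReal.coe_ne_top, one_mul]
  have hediam : ediam (F '' A) = K * ediam A := by
    refine (LipschitzWith.ediam_image_le (fun x y => (hF x y).le) A).antisymm ?_
    apply ENNReal.mul_le_of_le_div'
    rw [div_eq_mul_inv, mul_comm, ← ENNReal.coe_inv hK0]
    exact hanti.le_mul_ediam_image A
  rw [diam, diam, hediam, ENNReal.toReal_mul, ENNReal.coe_toReal, Real.coe_toNNReal r hr.le]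

end Similarity

section Agreement

variable {X Y Z : Type*} [MetricSpace X] [MetricSpace Y] [MetricSpace Z] {m : ℕ}

lemma IsAttractor.mapsTo {S : ℕ → X → X} {K : Set X} (hK : IsAttractor m S K) {i : ℕ}
    (hi : i < m) : MapsTo (S i) K K := fun x hx => by
  rw [hK.2.2]
  exact mem_biUnion (Finset.mem_range.2 hi) (mem_image_of_mem _ hx)

lemma IsStructuralParam.agrees {S : ℕ → X → X} {T : ℕ → ℝ → ℝ} {t : ℕ → ℝ} {z : ℕ → X}
    {g : ℝ → X} (hg : IsStructuralParam m S T t z g) : Agrees m T S (Icc 0 1) g :=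
  fun i hi x hx => (hg.2.2 i hi x hx).symm

lemma Agrees.comp {S : ℕ → X → X} {S' : ℕ → Y → Y} {S'' : ℕ → Z → Z} {s : Set X} {s' : Set Y}
    {f : X → Y} {f' : Y → Z} (hf' : Agrees m S' S'' s' f') (hf : Agrees m S S' s f)
    (hfs : MapsTo f s s') : Agrees m S S'' s (f' ∘ f) :=
  fun i hi x hx => by
    simp only [Function.comp_apply, hf i hi x hx, ← hf' i hi (f x) (hfs hx)]

lemma Agrees.compS_apply {S : ℕ → X → X} {S' : ℕ → Y → Y} {s : Set X} {f : X → Y}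
    (hf : Agrees m S S' s f) (hs : ∀ i < m, MapsTo (S i) s s) {l : List ℕ}
    (hl : ∀ j ∈ l, j < m) {x : X} (hx : x ∈ s) : f (compS S l x) = compS S' l (f x) := by
  induction l with
  | nil => rfl
  | cons i l ih =>
    simp only [List.mem_cons, forall_eq_or_imp] at hl
    simp only [compS, Function.comp_apply, ← ih hl.2, hf i hl.1 _ (mapsTo_compS hs hl.2 hx)]

lemma Agrees.image_compS {S : ℕ → X → X} {S' : ℕ → Y → Y} {s : Set X} {f : X → Y}
    (hf : Agrees m S S' s f) (hs : ∀ i < m, MapsTo (S i) s s) {l : List ℕ}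
    (hl : ∀ j ∈ l, j < m) : f '' (compS S l '' s) = compS S' l '' (f '' s) := by
  simp only [image_image]
  exact image_congr fun x hx => hf.compS_apply hs hl hx

end Agreement

lemma eq_affine_of_dist_eq {φ : ℝ → ℝ} {r : ℝ} (hr : 0 < r)
    (h : ∀ x y, dist (φ x) (φ y) = r * dist x y) (x : ℝ) :
    φ x = φ 0 + (φ 1 - φ 0) * x := by
  have hsq : ∀ a b, (φ a - φ b) ^ 2 = r ^ 2 * (a - b) ^ 2 := fun a b => by
    rw [← sq_abs, ← Real.dist_eq, h, Real.dist_eq, mul_pow, sq_abs]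
  have e0 := hsq x 0
  have e1 := hsq x 1
  have e2 := hsq 1 0
  have hne : φ 1 - φ 0 ≠ 0 := fun h0 => by
    rw [h0] at e2
    nlinarith
  have key : (φ 1 - φ 0) * (φ x - φ 0 - (φ 1 - φ 0) * x) = 0 := by
    linear_combination e0 / 2 - e1 / 2 - (x - 1 / 2) * e2
  linear_combination (mul_eq_zero.1 key).resolve_left hne

lemma image_Icc_zero_one_of_dist_eq {φ : ℝ → ℝ} {r : ℝ} (hr : 0 < r)
    (h : ∀ x y, dist (φ x) (φ y) = r * dist x y) :
    φ '' Icc 0 1 = uIcc (φ 0) (φ 1) := by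
  rw [image_congr fun x _ => eq_affine_of_dist_eq hr h x, ← uIcc_of_le zero_le_one,
    ← image_image (φ 0 + ·) ((φ 1 - φ 0) * ·), image_const_mul_uIcc, image_const_add_uIcc]
  simp

lemma Set.OrdConnected.subset_Icc_of_not_subset {α : Type*} [LinearOrder α] {K : Set α}
    (hK : K.OrdConnected) {a b : α} (hn : ¬ Icc a b ⊆ K)
    (hext : b ∈ K ∧ K ⊆ Iic b ∨ a ∈ K ∧ K ⊆ Ici a) : K ⊆ Icc a b := by
  rcases hext with ⟨hb, hKb⟩ | ⟨ha, hKa⟩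
  · exact fun x hx => ⟨not_lt.1 fun hxa => hn ((Icc_subset_Icc_left hxa.le).trans
      (hK.out hx hb)), hKb hx⟩
  · exact fun x hx => ⟨hKa hx, not_lt.1 fun hbx => hn ((Icc_subset_Icc_right hbx.le).trans
      (hK.out ha hx))⟩

lemma exists_Icc_subset_or_overlap {ι : Type*} (s : Finset ι) (A B : ι → ℝ) {u v : ℝ}
    (huv : u ≤ v) (hcov : ∀ x ∈ Icc u v, ∃ i ∈ s, x ∈ Icc (A i) (B i))
    (hnc : ∀ i ∈ s, ¬ Icc u v ⊆ Icc (A i) (B i)) :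
    (∃ i ∈ s, Icc (A i) (B i) ⊆ Icc u v) ∨
      ∃ i ∈ s, ∃ j ∈ s, A i ≤ u ∧ v ≤ B j ∧ u < A j ∧ A j ≤ B i ∧ B i < v := by
  obtain ⟨i₀, hi₀, hui₀⟩ := hcov u (left_mem_Icc.2 huv)
  obtain ⟨j₀, hj₀, hvj₀⟩ := hcov v (right_mem_Icc.2 huv)
  obtain ⟨i, hi, hi_max⟩ := (s.filter fun i => A i ≤ u).exists_max_image B
    ⟨i₀, Finset.mem_filter.2 ⟨hi₀, hui₀.1⟩⟩
  obtain ⟨j, hj, hj_min⟩ := (s.filter fun j => v ≤ B j).exists_min_image A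
    ⟨j₀, Finset.mem_filter.2 ⟨hj₀, hvj₀.2⟩⟩
  simp only [Finset.mem_filter, and_imp] at hi hj hi_max hj_min
  have hBi : B i < v := not_le.1 fun h => hnc i hi.1 (Icc_subset_Icc hi.2 h)
  have hAj : u < A j := not_le.1 fun h => hnc j hj.1 (Icc_subset_Icc h hj.2)
  by_cases hij : A j ≤ B i
  · exact Or.inr ⟨i, hi.1, j, hj.1, hi.2, hj.2, hAj, hij, hBi⟩
  -- an interval through the midpoint of the gap `(B i, A j)` reaches neither `u` nor `v`
  have huBi : u ≤ B i := hui₀.2.trans (hi_max i₀ hi₀ hui₀.1)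
  have hAjv : A j ≤ v := (hj_min j₀ hj₀ hvj₀.2).trans hvj₀.1
  obtain ⟨k, hk, hxk⟩ := hcov ((B i + A j) / 2) ⟨by linarith, by linarith⟩
  refine Or.inl ⟨k, hk, Icc_subset_Icc ?_ ?_⟩
  · by_contra! hAk
    linarith [hi_max k hk hAk.le, hxk.2]
  · by_contra! hBk
    linarith [hj_min k hk hBk.le, hxk.1]

def cell (T : ℕ → ℝ → ℝ) (l : List ℕ) : Set ℝ := compS T l '' Icc 0 1

namespace IsLinearZipper

variable {m : ℕ} {T : ℕ → ℝ → ℝ} {rT t : ℕ → ℝ} {ε : ℕ → ℕ}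

lemma strictMonoOn (h : IsLinearZipper m T rT t ε) : StrictMonoOn t (Iic m) :=
  strictMonoOn_Iic_of_lt_succ fun i hi => h.2.2.2 i hi

lemma mem_Icc (h : IsLinearZipper m T rT t ε) {i : ℕ} (hi : i ≤ m) : t i ∈ Icc (0 : ℝ) 1 := by
  rw [← h.2.1, ← h.2.2.1]
  exact ⟨h.strictMonoOn.monotoneOn (Nat.zero_le m) hi (Nat.zero_le i),
    h.strictMonoOn.monotoneOn hi (le_refl m) hi⟩

lemma image_Icc (h : IsLinearZipper m T rT t ε) {i : ℕ} (hi : i < m) :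
    T i '' Icc 0 1 = Icc (t i) (t (i + 1)) := by
  obtain ⟨hr, -, hdist⟩ := h.1.2.1 i hi
  have h0 : T i 0 = t (i + ε i) := h.2.1 ▸ (h.1.2.2.2 i hi).1
  have h1 : T i 1 = t (i + 1 - ε i) := h.2.2.1 ▸ (h.1.2.2.2 i hi).2
  rw [image_Icc_zero_one_of_dist_eq hr hdist, h0, h1]
  rcases Nat.le_one_iff_eq_zero_or_eq_one.1 (h.1.2.2.1 i hi) with hε | hε
  · rw [hε, Nat.add_zero, Nat.sub_zero, uIcc_of_le (h.2.2.2 i hi).le]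
  · rw [hε, Nat.add_sub_cancel, uIcc_of_ge (h.2.2.2 i hi).le]

lemma mapsTo (h : IsLinearZipper m T rT t ε) {i : ℕ} (hi : i < m) :
    MapsTo (T i) (Icc 0 1) (Icc 0 1) := by
  rw [mapsTo_iff_image_subset, h.image_Icc hi]
  exact Icc_subset_Icc (h.mem_Icc hi.le).1 (h.mem_Icc hi).2

lemma exists_mem_Icc (h : IsLinearZipper m T rT t ε) {x : ℝ} (hx : x ∈ Icc (0 : ℝ) 1) :
    ∃ i < m, x ∈ Icc (t i) (t (i + 1)) := by
  have hm := h.1.1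
  have hlast : x ≤ t (m - 1 + 1) := by rw [Nat.sub_add_cancel hm, h.2.2.1]; exact hx.2
  have hex : ∃ k, x ≤ t (k + 1) := ⟨m - 1, hlast⟩
  refine ⟨Nat.find hex, (Nat.find_le hlast).trans_lt (by omega), ?_, Nat.find_spec hex⟩
  rcases hk : Nat.find hex with _ | k
  · exact h.2.1 ▸ hx.1
  · exact (not_le.1 (Nat.find_min hex (hk ▸ k.lt_succ_self))).le

lemma cell_eq_uIcc (h : IsLinearZipper m T rT t ε) {l : List ℕ} (hl : ∀ j ∈ l, j < m) :
    cell T l = uIcc (compS T l 0) (compS T l 1) :=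
  image_Icc_zero_one_of_dist_eq (h.1.2.1.ratioProd_pos hl) (h.1.2.1.dist_compS hl)

lemma sub_le_ratioProd (h : IsLinearZipper m T rT t ε) {l : List ℕ} (hl : ∀ j ∈ l, j < m)
    {u v : ℝ} (huv : u ≤ v) (hsub : Icc u v ⊆ cell T l) : v - u ≤ ratioProd rT l := by
  rw [h.cell_eq_uIcc hl, ← uIcc_of_le huv] at hsub
  have := abs_sub_le_of_uIcc_subset_uIcc hsub
  rwa [abs_of_nonneg (sub_nonneg.2 huv), ← Real.dist_eq, dist_comm, h.1.2.1.dist_compS hl,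
    dist_comm, Real.dist_0_eq_abs, abs_one, mul_one] at this

lemma cell_append_singleton (h : IsLinearZipper m T rT t ε) (l : List ℕ) {i : ℕ} (hi : i < m) :
    cell T (l ++ [i]) = compS T l '' Icc (t i) (t (i + 1)) := by
  rw [cell, compS_append, image_comp, compS, compS, Function.comp_id, h.image_Icc hi]

lemma cell_append_subset (h : IsLinearZipper m T rT t ε) (l : List ℕ) {i : ℕ} (hi : i < m) :
    cell T (l ++ [i]) ⊆ cell T l := by
  rw [cell, compS_append, image_comp]
  exact image_mono (h.mapsTo hi).image_subset

lemma cell_subset_Icc (h : IsLinearZipper m T rT t ε) {l : List ℕ} (hl : ∀ j ∈ l, j < m) :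
    cell T l ⊆ Icc 0 1 :=
  (mapsTo_compS (fun _ hi => h.mapsTo hi) hl).image_subset

lemma exists_mem_cell_append (h : IsLinearZipper m T rT t ε) {l : List ℕ} {x : ℝ}
    (hx : x ∈ cell T l) : ∃ i < m, x ∈ cell T (l ++ [i]) := by
  obtain ⟨y, hy, rfl⟩ := hx
  obtain ⟨i, hi, hyi⟩ := h.exists_mem_Icc hy
  exact ⟨i, hi, h.cell_append_singleton l hi ▸ mem_image_of_mem _ hyi⟩

lemma exists_maximal_cell (h : IsLinearZipper m T rT t ε) {u v : ℝ} (huv : u < v)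
    {l₀ : List ℕ} (hl₀ : ∀ j ∈ l₀, j < m) (hsub : Icc u v ⊆ cell T l₀) :
    ∃ l, (∀ j ∈ l, j < m) ∧ Icc u v ⊆ cell T l ∧ cell T l ⊆ cell T l₀ ∧
      ∀ i < m, ¬ Icc u v ⊆ cell T (l ++ [i]) := by
  have hm : (Finset.range m).Nonempty := Finset.nonempty_range_iff.2 (Nat.one_le_iff_ne_zero.1 h.1.1)
  set ρ := (Finset.range m).sup' hm rT
  have hρ : ∀ i < m, rT i ≤ ρ := fun i hi => Finset.le_sup' rT (Finset.mem_range.2 hi)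
  have hρ0 : 0 ≤ ρ := (h.1.2.1 0 h.1.1).1.le.trans (hρ 0 h.1.1)
  have hρ1 : ρ < 1 :=
    (Finset.sup'_lt_iff hm).2 fun i hi => (h.1.2.1 i (Finset.mem_range.1 hi)).2.1
  -- otherwise there are cells around `Icc u v` of arbitrarily small length
  by_contra! hne
  have hdeep : ∀ k : ℕ, ∃ l, (∀ j ∈ l, j < m) ∧ Icc u v ⊆ cell T l ∧ cell T l ⊆ cell T l₀ ∧
      ratioProd rT l ≤ ρ ^ k * ratioProd rT l₀ := by
    intro k
    induction k with
    | zero => exact ⟨l₀, hl₀, hsub, subset_rfl, by simp⟩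
    | succ k ih =>
      obtain ⟨l, hl, hsubl, hll₀, hR⟩ := ih
      obtain ⟨i, hi, hsubi⟩ := hne l hl hsubl hll₀
      refine ⟨l ++ [i], forall_mem_append_singleton_lt hl hi, hsubi,
        (h.cell_append_subset l hi).trans hll₀, ?_⟩
      rw [ratioProd_append_singleton, pow_succ, mul_right_comm]
      exact mul_le_mul hR (hρ i hi) (h.1.2.1 i hi).1.le
        (mul_nonneg (pow_nonneg hρ0 k) (h.1.2.1.ratioProd_pos hl₀).le)
  have hR₀ := h.1.2.1.ratioProd_pos hl₀
  obtain ⟨k, hk⟩ := exists_pow_lt_of_lt_one (div_pos (sub_pos.2 huv) hR₀) hρ1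
  obtain ⟨l, hl, hsubl, -, hR⟩ := hdeep k
  have := h.sub_le_ratioProd hl huv.le hsubl
  rw [lt_div_iff₀ hR₀] at hk
  linarith

lemma exists_cell_append_subset (h : IsLinearZipper m T rT t ε) {a b : ℝ} (hab : a < b)
    {l₀ : List ℕ} (hl₀ : ∀ j ∈ l₀, j < m) (hsub : Icc a b ⊆ cell T l₀)
    (hext : cell T l₀ ⊆ Iic b ∨ cell T l₀ ⊆ Ici a) :
    ∃ l c, (∀ j ∈ l, j < m) ∧ c < m ∧ Icc a b ⊆ cell T l ∧ cell T (l ++ [c]) ⊆ Icc a b := by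
  obtain ⟨l, hl, hsubl, hll₀, hmax⟩ := h.exists_maximal_cell hab hl₀ hsub
  have hconn : ∀ c < m, (cell T (l ++ [c])).OrdConnected := fun c hc => by
    rw [h.cell_eq_uIcc (forall_mem_append_singleton_lt hl hc)]
    exact ordConnected_uIcc
  have hK : ∀ c < m, cell T (l ++ [c]) ⊆ cell T l₀ := fun c hc =>
    (h.cell_append_subset l hc).trans hll₀
  rcases hext with hext | hext
  · obtain ⟨c, hc, hbc⟩ := h.exists_mem_cell_append (hsubl (right_mem_Icc.2 hab.le))
    exact ⟨l, c, hl, hc, hsubl, (hconn c hc).subset_Icc_of_not_subset (hmax c hc)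
      (Or.inl ⟨hbc, (hK c hc).trans hext⟩)⟩
  · obtain ⟨c, hc, hac⟩ := h.exists_mem_cell_append (hsubl (left_mem_Icc.2 hab.le))
    exact ⟨l, c, hl, hc, hsubl, (hconn c hc).subset_Icc_of_not_subset (hmax c hc)
      (Or.inr ⟨hac, (hK c hc).trans hext⟩)⟩

lemma exists_cell_pair (h : IsLinearZipper m T rT t ε) {u v : ℝ} (hu : 0 ≤ u) (huv : u < v)
    (hv : v ≤ 1) :
    ∃ l₁ l₂ c₁ c₂, (∀ j ∈ l₁, j < m) ∧ (∀ j ∈ l₂, j < m) ∧ c₁ < m ∧ c₂ < m ∧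
      Icc u v ⊆ cell T l₁ ∪ cell T l₂ ∧ (cell T l₁ ∩ cell T l₂).Nonempty ∧
      cell T (l₁ ++ [c₁]) ⊆ Icc u v ∧ cell T (l₂ ++ [c₂]) ⊆ Icc u v := by
  obtain ⟨w, hw, hsubw, -, hmax⟩ := h.exists_maximal_cell huv (l₀ := []) (by simp)
    (by simpa [cell, compS] using Icc_subset_Icc hu hv)
  obtain ⟨A, B, hAB⟩ : ∃ A B : ℕ → ℝ, ∀ i < m, cell T (w ++ [i]) = Icc (A i) (B i) :=
    ⟨_, _, fun i hi => h.cell_eq_uIcc (forall_mem_append_singleton_lt hw hi)⟩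
  have hcov : ∀ x ∈ Icc u v, ∃ i ∈ Finset.range m, x ∈ Icc (A i) (B i) := fun x hx => by
    obtain ⟨i, hi, hxi⟩ := h.exists_mem_cell_append (hsubw hx)
    exact ⟨i, Finset.mem_range.2 hi, hAB i hi ▸ hxi⟩
  have hnc : ∀ i ∈ Finset.range m, ¬ Icc u v ⊆ Icc (A i) (B i) := fun i hi => by
    rw [← hAB i (Finset.mem_range.1 hi)]
    exact hmax i (Finset.mem_range.1 hi)
  rcases exists_Icc_subset_or_overlap _ A B huv.le hcov hnc with
    ⟨i, hi, hsub⟩ | ⟨i, hi, j, hj, hAi, hBj, hAj, hAjBi, hBi⟩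
  · rw [Finset.mem_range] at hi
    rw [← hAB i hi] at hsub
    exact ⟨w, w, i, i, hw, hw, hi, hi, by rwa [union_self], by
      rw [inter_self]; exact ⟨u, hsubw (left_mem_Icc.2 huv.le)⟩, hsub, hsub⟩
  rw [Finset.mem_range] at hi hj
  -- `Icc u (B i)` ends where the cell of `w ++ [i]` ends, `Icc (A j) v` starts where that of
  -- `w ++ [j]` starts
  obtain ⟨l₁, c₁, hl₁, hc₁, hsub₁, hchild₁⟩ := h.exists_cell_append_subset
    (hAj.trans_le hAjBi) (forall_mem_append_singleton_lt hw hi)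
    (hAB i hi ▸ Icc_subset_Icc_left hAi) (Or.inl (hAB i hi ▸ Icc_subset_Iic_self))
  obtain ⟨l₂, c₂, hl₂, hc₂, hsub₂, hchild₂⟩ := h.exists_cell_append_subset
    (hAjBi.trans_lt hBi) (forall_mem_append_singleton_lt hw hj)
    (hAB j hj ▸ Icc_subset_Icc_right hBj) (Or.inr (hAB j hj ▸ Icc_subset_Ici_self))
  refine ⟨l₁, l₂, c₁, c₂, hl₁, hl₂, hc₁, hc₂, fun x hx => ?_,
    ⟨A j, hsub₁ ⟨hAj.le, hAjBi⟩, hsub₂ (left_mem_Icc.2 (hAjBi.trans_lt hBi).le)⟩,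
    hchild₁.trans (Icc_subset_Icc_right hBi.le), hchild₂.trans (Icc_subset_Icc_left hAj.le)⟩
  rcases le_total x (B i) with hx' | hx'
  · exact Or.inl (hsub₁ ⟨hx.1, hx'⟩)
  · exact Or.inr (hsub₂ ⟨hAjBi.trans hx', hx.2⟩)

end IsLinearZipper

section Subarcs

variable {X : Type*} [MetricSpace X] {m : ℕ} {T : ℕ → ℝ → ℝ} {rT t : ℕ → ℝ} {ε : ℕ → ℕ}
  {S : ℕ → X → X} {p : ℕ → ℝ} {g : ℝ → X}

lemma diam_image_cell (hT : IsLinearZipper m T rT t ε) (hS : IsSimilaritySystem m S p)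
    (hg : Agrees m T S (Icc 0 1) g) {l : List ℕ} (hl : ∀ j ∈ l, j < m) :
    diam (g '' cell T l) = ratioProd p l * diam (g '' Icc 0 1) := by
  rw [cell, hg.image_compS (fun i hi => hT.mapsTo hi) hl]
  exact diam_image_of_dist_eq (hS.ratioProd_pos hl) (hS.dist_compS hl) _

lemma diam_image_le_of_subset_cell_union (hT : IsLinearZipper m T rT t ε)
    (hS : IsSimilaritySystem m S p) (hg : Agrees m T S (Icc 0 1) g)
    (hbd : IsBounded (g '' Icc 0 1)) {l₁ l₂ : List ℕ} (hl₁ : ∀ j ∈ l₁, j < m)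
    (hl₂ : ∀ j ∈ l₂, j < m) {I : Set ℝ} (hI : I ⊆ cell T l₁ ∪ cell T l₂)
    (hinter : (cell T l₁ ∩ cell T l₂).Nonempty) :
    diam (g '' I) ≤ (ratioProd p l₁ + ratioProd p l₂) * diam (g '' Icc 0 1) := by
  obtain ⟨x, hx₁, hx₂⟩ := hinter
  have hbd_cell : ∀ {l}, (∀ j ∈ l, j < m) → IsBounded (g '' cell T l) := fun hl =>
    hbd.subset (image_mono (hT.cell_subset_Icc hl))
  calc diam (g '' I) ≤ diam (g '' cell T l₁ ∪ g '' cell T l₂) := by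
        rw [← image_union]
        exact diam_mono (image_mono hI)
          (image_union g _ _ ▸ (hbd_cell hl₁).union (hbd_cell hl₂))
    _ ≤ diam (g '' cell T l₁) + diam (g '' cell T l₂) :=
        diam_union' ⟨g x, mem_image_of_mem g hx₁, mem_image_of_mem g hx₂⟩
    _ = _ := by rw [diam_image_cell hT hS hg hl₁, diam_image_cell hT hS hg hl₂, add_mul]

lemma mul_ratioProd_mul_diam_le (hT : IsLinearZipper m T rT t ε)
    (hS : IsSimilaritySystem m S p) (hg : Agrees m T S (Icc 0 1) g)
    (hbd : IsBounded (g '' Icc 0 1)) {a : ℝ} (ha : ∀ i < m, a ≤ p i) {l : List ℕ}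
    (hl : ∀ j ∈ l, j < m) {c : ℕ} (hc : c < m) {I : Set ℝ} (hI : I ⊆ Icc 0 1)
    (hchild : cell T (l ++ [c]) ⊆ I) :
    a * ratioProd p l * diam (g '' Icc 0 1) ≤ diam (g '' I) :=
  calc a * ratioProd p l * diam (g '' Icc 0 1)
      ≤ p c * ratioProd p l * diam (g '' Icc 0 1) := by
        gcongr
        · exact (hS.ratioProd_pos hl).le
        · exact ha c hc
    _ = diam (g '' cell T (l ++ [c])) := by
        rw [diam_image_cell hT hS hg (forall_mem_append_singleton_lt hl hc),
          ratioProd_append_singleton, mul_comm (p c)]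
    _ ≤ diam (g '' I) := diam_mono (image_mono hchild) (hbd.subset (image_mono hI))

variable {Y : Type*} [MetricSpace Y] {S' : ℕ → Y → Y} {g' : ℝ → Y}

lemma mul_diam_image_Icc_le (hT : IsLinearZipper m T rT t ε) (hS : IsSimilaritySystem m S p)
    (hS' : IsSimilaritySystem m S' p) (hg : Agrees m T S (Icc 0 1) g)
    (hg' : Agrees m T S' (Icc 0 1) g') (hbd : IsBounded (g '' Icc 0 1))
    (hbd' : IsBounded (g' '' Icc 0 1)) {a : ℝ} (ha0 : 0 ≤ a) (ha : ∀ i < m, a ≤ p i)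
    {u v : ℝ} (hu : 0 ≤ u) (huv : u < v) (hv : v ≤ 1) :
    a * diam (g '' Icc 0 1) * diam (g' '' Icc u v) ≤
      2 * diam (g' '' Icc 0 1) * diam (g '' Icc u v) := by
  obtain ⟨l₁, l₂, c₁, c₂, hl₁, hl₂, hc₁, hc₂, hcov, hinter, hchild₁, hchild₂⟩ :=
    hT.exists_cell_pair hu huv hv
  have hup := diam_image_le_of_subset_cell_union hT hS' hg' hbd' hl₁ hl₂ hcov hinter
  have hlow₁ := mul_ratioProd_mul_diam_le hT hS hg hbd ha hl₁ hc₁ (Icc_subset_Icc hu hv) hchild₁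
  have hlow₂ := mul_ratioProd_mul_diam_le hT hS hg hbd ha hl₂ hc₂ (Icc_subset_Icc hu hv) hchild₂
  have hD : 0 ≤ a * diam (g '' Icc 0 1) := mul_nonneg ha0 diam_nonneg
  have hD' : 0 ≤ diam (g' '' Icc 0 1) := diam_nonneg
  calc a * diam (g '' Icc 0 1) * diam (g' '' Icc u v)
      ≤ a * diam (g '' Icc 0 1) * ((ratioProd p l₁ + ratioProd p l₂) * diam (g' '' Icc 0 1)) :=
        mul_le_mul_of_nonneg_left hup hD
    _ = diam (g' '' Icc 0 1) * (a * ratioProd p l₁ * diam (g '' Icc 0 1)) +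
        diam (g' '' Icc 0 1) * (a * ratioProd p l₂ * diam (g '' Icc 0 1)) := by ring
    _ ≤ diam (g' '' Icc 0 1) * diam (g '' Icc u v) + diam (g' '' Icc 0 1) * diam (g '' Icc u v) :=
        add_le_add (mul_le_mul_of_nonneg_left hlow₁ hD') (mul_le_mul_of_nonneg_left hlow₂ hD')
    _ = 2 * diam (g' '' Icc 0 1) * diam (g '' Icc u v) := by ring

lemma exists_diam_image_Icc_le (hT : IsLinearZipper m T rT t ε) (hS : IsSimilaritySystem m S p)
    (hS' : IsSimilaritySystem m S' p) (hg : Agrees m T S (Icc 0 1) g)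
    (hg' : Agrees m T S' (Icc 0 1) g') (hbd : IsBounded (g '' Icc 0 1))
    (hbd' : IsBounded (g' '' Icc 0 1)) (hD : 0 < diam (g '' Icc 0 1)) :
    ∃ K, 0 ≤ K ∧ ∀ u v, 0 ≤ u → u < v → v ≤ 1 →
      diam (g' '' Icc u v) ≤ K * diam (g '' Icc u v) := by
  obtain ⟨j, hj, hj_min⟩ := (Finset.range m).exists_min_image p
    (Finset.nonempty_range_iff.2 (Nat.one_le_iff_ne_zero.1 hT.1.1))
  have ha : 0 < p j := (hS j (Finset.mem_range.1 hj)).1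
  refine ⟨2 * diam (g' '' Icc 0 1) / (p j * diam (g '' Icc 0 1)), by positivity,
    fun u v hu huv hv => ?_⟩
  rw [div_mul_eq_mul_div, le_div_iff₀' (by positivity)]
  exact mul_diam_image_Icc_le hT hS hS' hg hg' hbd hbd' ha.le
    (fun i hi => hj_min i (Finset.mem_range.2 hi)) hu huv hv

end Subarcs

section Arcs

variable {X Y : Type*} [MetricSpace X] [MetricSpace Y]

lemma IsArcParam.isBounded {γ : Set X} {g : ℝ → X} (hg : IsArcParam γ g) :
    IsBounded (g '' Icc 0 1) :=
  (isCompact_Icc.image_of_continuousOn hg.1).isBounded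

lemma IsArcParam.nontrivial {γ : Set X} {g : ℝ → X} (hg : IsArcParam γ g) : γ.Nontrivial :=
  hg.2.2 ▸ ⟨g 0, mem_image_of_mem g (left_mem_Icc.2 zero_le_one), g 1,
    mem_image_of_mem g (right_mem_Icc.2 zero_le_one), fun h => zero_ne_one
      (hg.2.1 (left_mem_Icc.2 zero_le_one) (right_mem_Icc.2 zero_le_one) h)⟩

lemma IsArcParam.diam_pos {γ : Set X} {g : ℝ → X} (hg : IsArcParam γ g) :
    0 < diam (g '' Icc 0 1) :=
  Metric.diam_pos (hg.2.2 ▸ hg.nontrivial) hg.isBounded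

lemma IsArcParam.comp {γ : Set X} {γ' : Set Y} {g : ℝ → X} {f : X → Y} (hg : IsArcParam γ g)
    (hf : IsHomeoOnto γ γ' f) : IsArcParam γ' (f ∘ g) := by
  have hmaps : MapsTo g (Icc 0 1) γ := hg.2.2 ▸ mapsTo_image g _
  exact ⟨hf.1.comp hg.1 hmaps, hf.2.1.comp hg.2.1 hmaps, by rw [image_comp, hg.2.2, hf.2.2]⟩

lemma BoundedTurning.dist_le {γ : Set X} {M : ℝ} (hγ : BoundedTurning γ M) {g : ℝ → X}
    (hg : IsArcParam γ g) {g' : ℝ → Y} (hbd' : IsBounded (g' '' Icc 0 1)) {K : ℝ} (hK0 : 0 ≤ K)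
    (hK : ∀ u v, 0 ≤ u → u < v → v ≤ 1 → diam (g' '' Icc u v) ≤ K * diam (g '' Icc u v))
    {u v : ℝ} (hu : u ∈ Icc (0 : ℝ) 1) (hv : v ∈ Icc (0 : ℝ) 1) :
    dist (g' u) (g' v) ≤ K * M * dist (g u) (g v) := by
  wlog huv : u ≤ v generalizing u v
  · rw [dist_comm, dist_comm (g u)]
    exact this hv hu (le_of_not_ge huv)
  rcases huv.eq_or_lt with rfl | huv
  · simp
  have hturn := hγ.2 g hg u hu v hv
  rw [uIcc_of_le huv.le] at hturn
  calc dist (g' u) (g' v) ≤ diam (g' '' Icc u v) :=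
        dist_le_diam_of_mem (hbd'.subset (image_mono (Icc_subset_Icc hu.1 hv.2)))
          (mem_image_of_mem g' (left_mem_Icc.2 huv.le))
          (mem_image_of_mem g' (right_mem_Icc.2 huv.le))
    _ ≤ K * diam (g '' Icc u v) := hK u v hu.1 huv hv.2
    _ ≤ K * (M * dist (g u) (g v)) := mul_le_mul_of_nonneg_left hturn hK0
    _ = K * M * dist (g u) (g v) := by ring

lemma exists_biLipschitz_const {f : X → Y} {s : Set X} {K₁ K₂ : ℝ}
    (h₁ : ∀ x ∈ s, ∀ y ∈ s, dist (f x) (f y) ≤ K₁ * dist x y)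
    (h₂ : ∀ x ∈ s, ∀ y ∈ s, dist x y ≤ K₂ * dist (f x) (f y)) :
    ∃ C ≥ (1 : ℝ), ∀ x ∈ s, ∀ y ∈ s,
      C⁻¹ * dist x y ≤ dist (f x) (f y) ∧ dist (f x) (f y) ≤ C * dist x y := by
  refine ⟨max 1 (max K₁ K₂), le_max_left _ _, fun x hx y hy => ⟨?_, ?_⟩⟩
  · rw [inv_mul_le_iff₀ (one_pos.trans_le (le_max_left _ _))]
    exact (h₂ x hx y hy).trans (mul_le_mul_of_nonneg_right
      ((le_max_right _ _).trans (le_max_right _ _)) dist_nonneg)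
  · exact (h₁ x hx y hy).trans (mul_le_mul_of_nonneg_right
      ((le_max_left _ _).trans (le_max_right _ _)) dist_nonneg)

end Arcs

lemma IsHomeoOnto.exists_biLipschitz {X Y : Type*} [MetricSpace X] [MetricSpace Y] {m : ℕ}
    {T : ℕ → ℝ → ℝ} {rT t : ℕ → ℝ} {ε : ℕ → ℕ} {S : ℕ → X → X} {S' : ℕ → Y → Y} {p : ℕ → ℝ}
    {γ : Set X} {γ' : Set Y} {g : ℝ → X} {f : X → Y} {M M' : ℝ}
    (hf : IsHomeoOnto γ γ' f) (hT : IsLinearZipper m T rT t ε) (hS : IsSimilaritySystem m S p)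
    (hS' : IsSimilaritySystem m S' p) (hg : Agrees m T S (Icc 0 1) g) (harc : IsArcParam γ g)
    (hfa : Agrees m S S' γ f) (hγ : BoundedTurning γ M) (hγ' : BoundedTurning γ' M') :
    ∃ C ≥ (1 : ℝ), ∀ x ∈ γ, ∀ y ∈ γ,
      C⁻¹ * dist x y ≤ dist (f x) (f y) ∧ dist (f x) (f y) ≤ C * dist x y := by
  have harc' : IsArcParam γ' (f ∘ g) := harc.comp hf
  have hg' : Agrees m T S' (Icc 0 1) (f ∘ g) := hfa.comp hg (harc.2.2 ▸ mapsTo_image g _)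
  obtain ⟨K₁, hK₁, hK₁_le⟩ :=
    exists_diam_image_Icc_le hT hS hS' hg hg' harc.isBounded harc'.isBounded harc.diam_pos
  obtain ⟨K₂, hK₂, hK₂_le⟩ :=
    exists_diam_image_Icc_le hT hS' hS hg' hg harc'.isBounded harc.isBounded harc'.diam_pos
  rw [← harc.2.2]
  refine exists_biLipschitz_const (K₁ := K₁ * M) (K₂ := K₂ * M') ?_ ?_
  · rintro _ ⟨u, hu, rfl⟩ _ ⟨v, hv, rfl⟩
    exact hγ.dist_le harc harc'.isBounded hK₁ hK₁_le hu hv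
  · rintro _ ⟨u, hu, rfl⟩ _ ⟨v, hv, rfl⟩
    exact hγ'.dist_le harc' harc.isBounded hK₂ hK₂_le hu hv

lemma le_of_forall_pow_mul_le {p q C d d' : ℝ} (hp : 0 < p) (hd' : 0 < d')
    (h : ∀ k : ℕ, q ^ k * d' ≤ C * (p ^ k * d)) : q ≤ p := by
  by_contra! hpq
  obtain ⟨k, hk⟩ := pow_unbounded_of_one_lt (C * d / d') ((one_lt_div hp).2 hpq)
  rw [div_pow, div_lt_div_iff₀ hd' (pow_pos hp k)] at hk
  linarith [h k]

lemma IsSimilaritySystem.ratio_eq_of_biLipschitz {X Y : Type*} [MetricSpace X] [MetricSpace Y]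
    {m : ℕ} {S : ℕ → X → X} {S' : ℕ → Y → Y} {p q : ℕ → ℝ} {γ : Set X} {f : X → Y}
    (hS : IsSimilaritySystem m S p) (hS' : IsSimilaritySystem m S' q)
    (hγ : ∀ i < m, MapsTo (S i) γ γ) (hfa : Agrees m S S' γ f) {C : ℝ} (hC : 0 < C)
    (hbil : ∀ x ∈ γ, ∀ y ∈ γ,
      C⁻¹ * dist x y ≤ dist (f x) (f y) ∧ dist (f x) (f y) ≤ C * dist x y)
    {x y : X} (hx : x ∈ γ) (hy : y ∈ γ) (hxy : x ≠ y) {i : ℕ} (hi : i < m) : p i = q i := by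
  have hl : ∀ k, ∀ j ∈ List.replicate k i, j < m := fun k j hj =>
    (List.eq_of_mem_replicate hj) ▸ hi
  have hpow : ∀ k : ℕ, C⁻¹ * (p i ^ k * dist x y) ≤ q i ^ k * dist (f x) (f y) ∧
      q i ^ k * dist (f x) (f y) ≤ C * (p i ^ k * dist x y) := fun k => by
    have := hbil _ (mapsTo_compS hγ (hl k) hx) _ (mapsTo_compS hγ (hl k) hy)
    rwa [hfa.compS_apply hγ (hl k) hx, hfa.compS_apply hγ (hl k) hy, hS.dist_compS (hl k),
      hS'.dist_compS (hl k), ratioProd_replicate, ratioProd_replicate] at this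
  have hd : 0 < dist x y := dist_pos.2 hxy
  have hd' : 0 < dist (f x) (f y) := (mul_pos (inv_pos.2 hC) hd).trans_le (hbil x hx y hy).1
  exact le_antisymm
    (le_of_forall_pow_mul_le (hS' i hi).1 hd fun k => (inv_mul_le_iff₀ hC).1 (hpow k).1)
    (le_of_forall_pow_mul_le (hS i hi).1 hd' fun k => (hpow k).2)

lemma min_div_div_le_one {x y : ℝ} (hx : x < 0) (hy : y < 0) : min (x / y) (y / x) ≤ 1 := by
  rcases le_total x y with h | h
  · exact (min_le_right _ _).trans ((div_le_one_of_neg hx).2 h)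
  · exact (min_le_left _ _).trans ((div_le_one_of_neg hy).2 h)

lemma min_div_div_eq_one_iff {x y : ℝ} (hx : x < 0) (hy : y < 0) :
    min (x / y) (y / x) = 1 ↔ x = y := by
  refine ⟨fun h => le_antisymm ?_ ?_, fun h => by rw [h, div_self hy.ne, min_self]⟩
  · exact (one_le_div_of_neg hy).1 (h ▸ min_le_left _ _)
  · exact (one_le_div_of_neg hx).1 (h ▸ min_le_right _ _)

lemma Finset.inf'_eq_iff_of_le {ι α : Type*} [SemilatticeInf α] {s : Finset ι} (H : s.Nonempty)
    {f : ι → α} {c : α} (hf : ∀ i ∈ s, f i ≤ c) : s.inf' H f = c ↔ ∀ i ∈ s, f i = c := by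
  refine ⟨fun h i hi => le_antisymm (hf i hi) (h ▸ s.inf'_le f hi), fun h => ?_⟩
  obtain ⟨i, hi⟩ := H
  exact le_antisymm ((s.inf'_le f hi).trans (hf i hi)) (Finset.le_inf' _ f fun j hj => (h j hj).ge)

/-- with `α = min_i min(log p_i / log q_i, log q_i / log p_i)` one has
`α ≤ 1`, and `α = 1` iff `p_i = q_i` for all `i`; consequently the agreeing
homeomorphism is bi-Lipschitz iff `p_i = q_i` for all `i`. -/
theorem biLipschitz_iff_equal_ratios {n : ℕ} (m : ℕ)
    (S S' : ℕ → EuclideanSpace ℝ (Fin n) → EuclideanSpace ℝ (Fin n)) (p q : ℕ → ℝ)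
    (z z' : ℕ → EuclideanSpace ℝ (Fin n)) (ε : ℕ → ℕ)
    (γ γ' : Set (EuclideanSpace ℝ (Fin n)))
    (hS : IsJordanZipper m S p z ε γ) (hS' : IsJordanZipper m S' q z' ε γ')
    (M M' : ℝ) (hγ : BoundedTurning γ M) (hγ' : BoundedTurning γ' M')
    (f : EuclideanSpace ℝ (Fin n) → EuclideanSpace ℝ (Fin n))
    (hf : IsHomeoOnto γ γ' f) (hfa : Agrees m S S' γ f)
    (hm : 0 < m) (α : ℝ)
    (hα : α = (Finset.range m).inf' (Finset.nonempty_range_iff.mpr hm.ne')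
      (fun i => min (Real.log (p i) / Real.log (q i)) (Real.log (q i) / Real.log (p i)))) :
    α ≤ 1 ∧ (α = 1 ↔ ∀ i < m, p i = q i) ∧
      ((∃ C ≥ (1:ℝ), ∀ x ∈ γ, ∀ y ∈ γ,
          C⁻¹ * dist x y ≤ dist (f x) (f y) ∧ dist (f x) (f y) ≤ C * dist x y)
        ↔ ∀ i < m, p i = q i) := by
  obtain ⟨⟨-, hSp, -⟩, hattr, T, rT, t, g, hT, hg, hginj, hgγ⟩ := hS
  have hSq := hS'.1.2.1
  have hlog : ∀ i < m, Real.log (p i) < 0 ∧ Real.log (q i) < 0 := fun i hi =>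
    ⟨Real.log_neg (hSp i hi).1 (hSp i hi).2.1, Real.log_neg (hSq i hi).1 (hSq i hi).2.1⟩
  have hle : ∀ i ∈ Finset.range m,
      min (Real.log (p i) / Real.log (q i)) (Real.log (q i) / Real.log (p i)) ≤ 1 :=
    fun i hi => min_div_div_le_one (hlog i (Finset.mem_range.1 hi)).1
      (hlog i (Finset.mem_range.1 hi)).2
  have harc : IsArcParam γ g := ⟨hg.1, hginj, hgγ⟩
  refine ⟨hα ▸ (Finset.inf'_le _ (Finset.mem_range.2 hm)).trans
    (hle 0 (Finset.mem_range.2 hm)), ?_, ⟨?_, fun hpq => ?_⟩⟩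
  · rw [hα, Finset.inf'_eq_iff_of_le _ hle]
    refine forall_congr' fun i => ?_
    rw [Finset.mem_range]
    exact imp_congr_right fun hi => (min_div_div_eq_one_iff (hlog i hi).1 (hlog i hi).2).trans
      (Real.log_injOn_pos.eq_iff (hSp i hi).1 (hSq i hi).1)
  · rintro ⟨C, hC, hbil⟩ i hi
    obtain ⟨x, hx, y, hy, hxy⟩ := harc.nontrivial
    exact hSp.ratio_eq_of_biLipschitz hSq (fun i hi => hattr.mapsTo hi) hfa
      (one_pos.trans_le hC) hbil hx hy hxy hi
  · exact hf.exists_biLipschitz hT hSp (fun i hi => hpq i hi ▸ hSq i hi) hg.agrees harc hfa hγ hγ'
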